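/- arXiv:2603.03099 — 7 statements merged into one kernel-verified Lean document; each statement's English description precedes it below -/
import Mathlib

section
/- For real numbers a_0 > 0 and a_t ≥ 0 for t = 1,...,T, the sum ∑_{t=1}^{T} a_t/(a_0 + ∑_{s=1}^{t} a_s) is at most log(1 + (∑_{t=1}^{T} a_t)/a_0). -/
/-! With `S t = a₀ + a₁ + ⋯ + a_t`, the `t`-th summand is `(S t - S (t-1)) / S t`, and
`1 - x / y ≤ log (y / x)` (i.e. `1 - z⁻¹ ≤ log z`) bounds it by `log (S t) - log (S (t-1))`.
The bounds telescope to `log (S T / a₀)`. -/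

open Finset Real

theorem sub_div_le_log_sub_log {x y : ℝ} (hx : 0 < x) (hy : 0 < y) :
    (y - x) / y ≤ log y - log x := by
  have h := one_sub_inv_le_log_of_pos (div_pos hy hx)
  rwa [log_div hy.ne' hx.ne', inv_div, ← div_self hy.ne', div_sub_div_same] at h

theorem sum_range_sub_div_le_log_sub_log (S : ℕ → ℝ) (n : ℕ) (hS : ∀ t ≤ n, 0 < S t) :
    ∑ t ∈ range n, (S (t + 1) - S t) / S (t + 1) ≤ log (S n) - log (S 0) :=
  calc ∑ t ∈ range n, (S (t + 1) - S t) / S (t + 1)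
      ≤ ∑ t ∈ range n, (log (S (t + 1)) - log (S t)) := by
        gcongr with t ht
        have ht := mem_range.mp ht
        exact sub_div_le_log_sub_log (hS t ht.le) (hS (t + 1) ht)
    _ = log (S n) - log (S 0) := sum_range_sub (fun t ↦ log (S t)) n

theorem sum_Icc_one_eq_sum_range {M : Type*} [AddCommMonoid M] (f : ℕ → M) (n : ℕ) :
    ∑ t ∈ Icc 1 n, f t = ∑ k ∈ range n, f (k + 1) := by
  induction n with
  | zero => simp
  | succ n ih => rw [sum_Icc_succ_top (Nat.le_add_left 1 n), ih, sum_range_succ]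

theorem stmt_0 (T : ℕ) (a : ℕ → ℝ) (ha0 : 0 < a 0)
    (ha : ∀ t, 1 ≤ t → t ≤ T → 0 ≤ a t) :
    ∑ t ∈ Finset.Icc 1 T, a t / (a 0 + ∑ s ∈ Finset.Icc 1 t, a s)
      ≤ Real.log (1 + (∑ t ∈ Finset.Icc 1 T, a t) / a 0) := by
  set S : ℕ → ℝ := fun t ↦ a 0 + ∑ s ∈ Icc 1 t, a s with hS_def
  have hS_pos : ∀ t ≤ T, 0 < S t := fun t ht ↦
    add_pos_of_pos_of_nonneg ha0 <| sum_nonneg fun s hs ↦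
      ha s (mem_Icc.mp hs).1 ((mem_Icc.mp hs).2.trans ht)
  have hS_succ : ∀ t, S (t + 1) - S t = a (t + 1) := fun t ↦ by
    simp only [hS_def, sum_Icc_succ_top (Nat.le_add_left 1 t)]
    ring
  have hlog : log (1 + (∑ t ∈ Icc 1 T, a t) / a 0) = log (S T) - log (S 0) := by
    rw [← log_div (hS_pos T le_rfl).ne' (hS_pos 0 (Nat.zero_le T)).ne']
    simp [hS_def, add_div, ha0.ne']
  rw [hlog, sum_Icc_one_eq_sum_range]
  simpa only [hS_succ] using sum_range_sub_div_le_log_sub_log S T hS_pos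
end

section
/- Let v_t satisfy v_t = (1 - 1/T) v_{t-1} + (1/T) g_t² with v_0 = v > 0, where T ≥ 2 is an integer and 1 ≤ t ≤ T. Then v_t ≥ (1/(4T)) (v T + ∑_{s=1}^{t} g_s²). -/
/-!
Unrolling the recursion, `v t` is at least `(1 - 1/T)^t` times `v₀ + (1/T) ∑ g_s²`, since every
weight `(1 - 1/T)^(t-s)` in the closed form dominates `(1 - 1/T)^t`. For `t ≤ T` that factor is at
least `1/4`, because `1 - x ≥ 4^(-x)` on `[0, 1/2]` by convexity of `x ↦ 4^(-x)`.
-/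

open Real Finset

-- `exp (-(log 4) x)` lies below its chord on `[0, 1/2]`, which is the line `1 - x`.
lemma exp_neg_log_four_mul_le_one_sub {x : ℝ} (hx0 : 0 ≤ x) (hx : x ≤ 1 / 2) :
    exp (-(log 4 * x)) ≤ 1 - x := by
  have hlog4 : log 4 = 2 * log 2 := by
    rw [show (4 : ℝ) = 2 ^ 2 by norm_num, log_pow]; norm_num
  have hchord := convexOn_exp.2 (Set.mem_univ 0) (Set.mem_univ (-log 2))
    (by linarith : 0 ≤ 1 - 2 * x) (by linarith : 0 ≤ 2 * x) (by ring)
  simp only [smul_eq_mul, exp_zero, exp_neg, exp_log two_pos] at hchord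
  calc exp (-(log 4 * x)) = exp ((1 - 2 * x) * 0 + 2 * x * -log 2) := by rw [hlog4]; ring_nf
    _ ≤ (1 - 2 * x) * 1 + 2 * x * 2⁻¹ := hchord
    _ = 1 - x := by ring

lemma one_div_four_le_one_sub_pow {x : ℝ} {t : ℕ} (hx0 : 0 ≤ x) (hx : x ≤ 1 / 2)
    (ht : t * x ≤ 1) :
    1 / 4 ≤ (1 - x) ^ t := calc
  (1 / 4 : ℝ) = exp (-log 4) := by rw [exp_neg, exp_log (by norm_num)]; norm_num
  _ ≤ exp (-(log 4 * x)) ^ t := by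
    rw [← exp_nat_mul, exp_le_exp]
    nlinarith [log_nonneg (show (1 : ℝ) ≤ 4 by norm_num)]
  _ ≤ (1 - x) ^ t := pow_le_pow_left₀ (exp_pos _).le (exp_neg_log_four_mul_le_one_sub hx0 hx) t

lemma one_sub_pow_mul_le_of_recurrence {α : ℝ} (hα0 : 0 ≤ α) (hα1 : α ≤ 1) {x v : ℕ → ℝ}
    (hx : ∀ s, 0 ≤ x s) {n : ℕ} (hrec : ∀ t < n, v (t + 1) = (1 - α) * v t + α * x (t + 1)) :
    ∀ t ≤ n, (1 - α) ^ t * (v 0 + α * ∑ s ∈ Icc 1 t, x s) ≤ v t := by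
  intro t
  induction t with
  | zero => simp
  | succ t ih =>
    intro ht
    have hβ0 : 0 ≤ 1 - α := by linarith
    have hpow : (1 - α) ^ t * (1 - α) ≤ 1 := by
      rw [← pow_succ]; exact pow_le_one₀ hβ0 (by linarith)
    have hαx : 0 ≤ α * x (t + 1) := mul_nonneg hα0 (hx _)
    rw [sum_Icc_succ_top (Nat.le_add_left 1 t), hrec t ht, pow_succ]
    nlinarith [mul_le_mul_of_nonneg_left (ih (by omega)) hβ0, mul_le_mul_of_nonneg_right hpow hαx]

theorem stmt_3_general (T : ℕ) (hT : 2 ≤ T) (v₀ : ℝ) (hv : 0 < v₀)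
    (g : ℕ → ℝ) (v : ℕ → ℝ) (h0 : v 0 = v₀)
    (hrec : ∀ t, 1 ≤ t → t ≤ T →
      v t = (1 - 1 / (T : ℝ)) * v (t - 1) + (1 / (T : ℝ)) * (g t) ^ 2)
    (t : ℕ) (htT : t ≤ T) :
    v t ≥ (1 / (4 * (T : ℝ))) * (v₀ * T + ∑ s ∈ Finset.Icc 1 t, (g s) ^ 2) := by
  have hT' : (2 : ℝ) ≤ T := by exact_mod_cast hT
  have hα1 : 1 / (T : ℝ) ≤ 1 / 2 := one_div_le_one_div_of_le two_pos hT'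
  have hlower := one_sub_pow_mul_le_of_recurrence (α := 1 / (T : ℝ)) (by positivity)
    (by linarith) (fun s => sq_nonneg (g s))
    (fun t ht => by simpa using hrec (t + 1) (by omega) ht) t htT
  have hquarter : 1 / 4 ≤ (1 - 1 / (T : ℝ)) ^ t := one_div_four_le_one_sub_pow (by positivity) hα1
    (by rw [mul_one_div, div_le_one (by positivity)]; exact_mod_cast htT)
  have hS : 0 ≤ ∑ s ∈ Icc 1 t, g s ^ 2 := sum_nonneg fun s _ => sq_nonneg (g s)
  rw [h0] at hlower
  calc (1 / (4 * (T : ℝ))) * (v₀ * T + ∑ s ∈ Icc 1 t, g s ^ 2)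
      = 1 / 4 * (v₀ + 1 / T * ∑ s ∈ Icc 1 t, g s ^ 2) := by field_simp
    _ ≤ (1 - 1 / (T : ℝ)) ^ t * (v₀ + 1 / T * ∑ s ∈ Icc 1 t, g s ^ 2) :=
      mul_le_mul_of_nonneg_right hquarter (by positivity)
    _ ≤ v t := hlower

theorem stmt_3 (T : ℕ) (hT : 2 ≤ T) (v₀ : ℝ) (hv : 0 < v₀)
    (g : ℕ → ℝ) (v : ℕ → ℝ) (h0 : v 0 = v₀)
    (hrec : ∀ t, 1 ≤ t → t ≤ T →
      v t = (1 - 1 / (T : ℝ)) * v (t - 1) + (1 / (T : ℝ)) * (g t) ^ 2)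
    (t : ℕ) (ht1 : 1 ≤ t) (htT : t ≤ T) :
    v t ≥ (1 / (4 * (T : ℝ))) * (v₀ * T + ∑ s ∈ Finset.Icc 1 t, (g s) ^ 2) :=
  stmt_3_general T hT v₀ hv g v h0 hrec t htT
end

section
/- Let T ≥ 2 be an integer, v > 0, η > 0, d ≥ 1 an integer, and let g_1,...,g_T ∈ ℝ^d. Define v_{t,i} by v_{t,i} = (1-1/T)v_{t-1,i} + (1/T)g_{t,i}² with v_{0,i} = v, and γ_{t,i} = (η/√T)/(√(v_{t,i}) + ε) for ε > 0. Then ∑_{t=1}^{T} ∑_{i=1}^{d} γ_{t,i}² g_{t,i}² ≤ 4 η² d log(1 + S_T/(v d T)), where S_T = v d + ∑_{t=1}^{T} ‖g_t‖². -/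
/-!
With `β = 1 - 1/T`, unrolling the recursion gives
`v_{t,i} ≥ β^t (v + (1/T) ∑_{s ≤ t} g_{s,i}²)`, and `β^T ≥ 1/4` for `T ≥ 2`, so
`γ_{t,i}² ≤ η² / (T v_{t,i}) ≤ 4η² / (T v + ∑_{s ≤ t} g_{s,i}²)`. For each coordinate the sum
of `g_{t,i}²` over these cumulative sums telescopes into a logarithm, since
`x / (a + x) ≤ log (a + x) - log a`, and concavity of `log` turns the sum of the `d` coordinate
logarithms into `d` times the logarithm of their average.
-/

open Finset Real

lemma one_quarter_le_one_sub_inv_pow {n : ℕ} (hn : 2 ≤ n) : (1 / 4 : ℝ) ≤ (1 - 1 / n) ^ n := by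
  have hn' : (2 : ℝ) ≤ n := by exact_mod_cast hn
  have hn0 : (0 : ℝ) < n := by linarith
  -- `1 - 1/n` lies above the chord of `exp` between `0` and `-log 2`
  have hchord : exp (2 / n * -log 2) ≤ 1 - 1 / n := by
    have h := convexOn_exp.2 (Set.mem_univ 0) (Set.mem_univ (-log 2))
      (show (0 : ℝ) ≤ 1 - 2 / n by rw [sub_nonneg, div_le_one hn0]; exact hn')
      (show (0 : ℝ) ≤ 2 / n by positivity) (by ring)
    simp only [smul_eq_mul, mul_zero, zero_add, exp_zero, exp_neg, exp_log two_pos] at h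
    exact h.trans_eq (by ring)
  calc (1 / 4 : ℝ) = exp (2 / n * -log 2) ^ n := by
        rw [← exp_nat_mul, show (n : ℝ) * (2 / n * -log 2) = -log (2 ^ 2) by
          rw [log_pow]; field_simp; push_cast; ring, exp_neg, exp_log (by norm_num)]
        norm_num
    _ ≤ (1 - 1 / n) ^ n := pow_le_pow_left₀ (exp_pos _).le hchord n

lemma pow_mul_add_sum_le_of_recursion {β a : ℝ} (hβ₀ : 0 ≤ β) (hβ₁ : β ≤ 1) (ha : 0 ≤ a)
    {x w : ℕ → ℝ} (hx : ∀ t, 0 ≤ x t) {n : ℕ}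
    (hrec : ∀ t < n, w (t + 1) = β * w t + a * x (t + 1)) :
    ∀ t ≤ n, β ^ t * (w 0 + a * ∑ s ∈ Icc 1 t, x s) ≤ w t := by
  intro t
  induction t with
  | zero => simp
  | succ t ih =>
    intro ht
    have hlast : β ^ (t + 1) * (a * x (t + 1)) ≤ a * x (t + 1) :=
      mul_le_of_le_one_left (mul_nonneg ha (hx _)) (pow_le_one₀ hβ₀ hβ₁)
    calc β ^ (t + 1) * (w 0 + a * ∑ s ∈ Icc 1 (t + 1), x s)
        = β * (β ^ t * (w 0 + a * ∑ s ∈ Icc 1 t, x s)) + β ^ (t + 1) * (a * x (t + 1)) := by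
          rw [sum_Icc_succ_top (by omega)]; ring
      _ ≤ β * w t + a * x (t + 1) :=
          add_le_add (mul_le_mul_of_nonneg_left (ih (by omega)) hβ₀) hlast
      _ = w (t + 1) := (hrec t (by omega)).symm

lemma div_add_le_log_add_sub_log {a x : ℝ} (ha : 0 < a) (hx : 0 ≤ x) :
    x / (a + x) ≤ log (a + x) - log a := by
  have hax : 0 < a + x := by linarith
  have h := one_sub_inv_le_log_of_pos (div_pos hax ha)
  rw [log_div hax.ne' ha.ne', inv_div] at h
  calc x / (a + x) = 1 - a / (a + x) := by field_simp; ring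
    _ ≤ log (a + x) - log a := h

lemma sum_div_add_partial_sum_le_log_sub_log {c : ℝ} (hc : 0 < c) {f : ℕ → ℝ}
    (hf : ∀ s, 0 ≤ f s) (n : ℕ) :
    ∑ t ∈ Icc 1 n, f t / (c + ∑ s ∈ Icc 1 t, f s)
      ≤ log (c + ∑ s ∈ Icc 1 n, f s) - log c := by
  induction n with
  | zero => simp
  | succ n ih =>
    have hpos : 0 < c + ∑ s ∈ Icc 1 n, f s :=
      add_pos_of_pos_of_nonneg hc (sum_nonneg fun s _ => hf s)
    have hstep := div_add_le_log_add_sub_log hpos (hf (n + 1))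
    rw [sum_Icc_succ_top (by omega), sum_Icc_succ_top (by omega), ← add_assoc]
    linarith

lemma sum_log_le_card_mul_log_average {ι : Type*} [Fintype ι] [Nonempty ι] {x : ι → ℝ}
    (hx : ∀ i, 0 < x i) :
    ∑ i, log (x i) ≤ Fintype.card ι * log ((∑ i, x i) / Fintype.card ι) := by
  have hcard : (0 : ℝ) < Fintype.card ι := by exact_mod_cast Fintype.card_pos
  have h := strictConcaveOn_log_Ioi.concaveOn.le_map_sum (t := univ)
    (w := fun _ => 1 / (Fintype.card ι : ℝ)) (p := x) (fun _ _ => by positivity)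
    (by simp [card_univ, hcard.ne']) (fun i _ => hx i)
  simp only [smul_eq_mul, ← mul_sum] at h
  calc ∑ i, log (x i) = Fintype.card ι * (1 / Fintype.card ι * ∑ i, log (x i)) := by
        field_simp
    _ ≤ Fintype.card ι * log (1 / Fintype.card ι * ∑ i, x i) :=
        mul_le_mul_of_nonneg_left h hcard.le
    _ = Fintype.card ι * log ((∑ i, x i) / Fintype.card ι) := by rw [one_div_mul_eq_div]

lemma sum_log_one_add_div_le {ι : Type*} [Fintype ι] [Nonempty ι] {c : ℝ} (hc : 0 < c)
    {y : ι → ℝ} (hy : ∀ i, 0 ≤ y i) :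
    ∑ i, log (1 + y i / c)
      ≤ Fintype.card ι * log (1 + (∑ i, y i) / (Fintype.card ι * c)) := by
  have hcard : (0 : ℝ) < Fintype.card ι := by exact_mod_cast Fintype.card_pos
  have h := sum_log_le_card_mul_log_average (x := fun i => 1 + y i / c) fun i => by
    have := hy i; positivity
  have haverage : (∑ i, (1 + y i / c)) / Fintype.card ι
      = 1 + (∑ i, y i) / (Fintype.card ι * c) := by
    rw [sum_add_distrib, ← sum_div]; simp only [sum_const, card_univ, nsmul_eq_mul, mul_one]
    field_simp
  rwa [haverage] at h

lemma sq_div_div_sqrt_add_le {T w η ε : ℝ} (hT : 0 < T) (hw : 0 < w) (hε : 0 ≤ ε) :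
    (η / √T / (√w + ε)) ^ 2 ≤ η ^ 2 / (T * w) := by
  rw [div_pow, div_pow, sq_sqrt hT.le, div_div]
  apply div_le_div_of_nonneg_left (sq_nonneg η) (by positivity)
  have : w ≤ (√w + ε) ^ 2 := by nlinarith [sq_sqrt hw.le, sqrt_nonneg w]
  gcongr

lemma add_sum_sq_le_four_mul_of_recursion {T : ℕ} (hT : 2 ≤ T) {v₀ : ℝ} (hv : 0 < v₀)
    {x w : ℕ → ℝ} (h0 : w 0 = v₀)
    (hrec : ∀ t < T, w (t + 1) = (1 - 1 / T) * w t + 1 / T * x (t + 1) ^ 2) :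
    ∀ t ≤ T, T * v₀ + ∑ s ∈ Icc 1 t, x s ^ 2 ≤ 4 * T * w t := by
  intro t ht
  have hT0 : (0 : ℝ) < T := by positivity
  have hβ₀ : (0 : ℝ) ≤ 1 - 1 / T := by
    rw [sub_nonneg, div_le_one hT0]; exact_mod_cast (by omega : 1 ≤ T)
  have hβ₁ : 1 - 1 / (T : ℝ) ≤ 1 := by linarith [one_div_pos.2 hT0]
  have hunroll := pow_mul_add_sum_le_of_recursion hβ₀ hβ₁ (by positivity)
    (fun s => sq_nonneg (x s)) hrec t ht
  have hquarter : 1 / 4 ≤ (1 - 1 / (T : ℝ)) ^ t :=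
    (one_quarter_le_one_sub_inv_pow hT).trans (pow_le_pow_of_le_one hβ₀ hβ₁ ht)
  rw [h0] at hunroll
  calc T * v₀ + ∑ s ∈ Icc 1 t, x s ^ 2
      = 4 * T * (1 / 4 * (v₀ + 1 / T * ∑ s ∈ Icc 1 t, x s ^ 2)) := by field_simp
    _ ≤ 4 * T * w t := by
        gcongr
        exact (mul_le_mul_of_nonneg_right hquarter (by positivity)).trans hunroll

theorem sum_sq_stepsize_mul_sq_le_log {T : ℕ} (hT : 2 ≤ T) {v₀ η ε : ℝ} (hv : 0 < v₀)
    (hε : 0 ≤ ε) {x w : ℕ → ℝ} (h0 : w 0 = v₀)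
    (hrec : ∀ t < T, w (t + 1) = (1 - 1 / T) * w t + 1 / T * x (t + 1) ^ 2) :
    ∑ t ∈ Icc 1 T, (η / √T / (√(w t) + ε)) ^ 2 * x t ^ 2
      ≤ 4 * η ^ 2 * log (1 + (∑ t ∈ Icc 1 T, x t ^ 2) / (T * v₀)) := by
  have hT0 : (0 : ℝ) < T := by positivity
  set A : ℕ → ℝ := fun t => T * v₀ + ∑ s ∈ Icc 1 t, x s ^ 2
  have hApos : ∀ t, 0 < A t := fun t =>
    add_pos_of_pos_of_nonneg (by positivity) (sum_nonneg fun s _ => sq_nonneg _)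
  have hlower := add_sum_sq_le_four_mul_of_recursion hT hv h0 hrec
  have hterm : ∀ t ∈ Icc 1 T, (η / √T / (√(w t) + ε)) ^ 2 * x t ^ 2
      ≤ 4 * η ^ 2 * (x t ^ 2 / A t) := by
    intro t ht
    have htT := (mem_Icc.1 ht).2
    have hw : 0 < w t := by nlinarith [hlower t htT, hApos t]
    calc (η / √T / (√(w t) + ε)) ^ 2 * x t ^ 2 ≤ η ^ 2 / (T * w t) * x t ^ 2 := by
          gcongr; exact sq_div_div_sqrt_add_le hT0 hw hε
      _ ≤ η ^ 2 / (A t / 4) * x t ^ 2 := by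
          gcongr ?_ * _
          exact div_le_div_of_nonneg_left (sq_nonneg η) (by linarith [hApos t])
            (by linarith [hlower t htT])
      _ = 4 * η ^ 2 * (x t ^ 2 / A t) := by field_simp
  calc ∑ t ∈ Icc 1 T, (η / √T / (√(w t) + ε)) ^ 2 * x t ^ 2
      ≤ 4 * η ^ 2 * ∑ t ∈ Icc 1 T, x t ^ 2 / A t := by
        rw [mul_sum]; exact sum_le_sum hterm
    _ ≤ 4 * η ^ 2 * (log (A T) - log (T * v₀)) := by
        gcongr
        exact sum_div_add_partial_sum_le_log_sub_log (by positivity) (fun s => sq_nonneg _) T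
    _ = 4 * η ^ 2 * log (1 + (∑ t ∈ Icc 1 T, x t ^ 2) / (T * v₀)) := by
        rw [← log_div (hApos T).ne' (by positivity)]
        congr 2
        simp only [A]; field_simp

theorem stmt_4_general (T d : ℕ) (hT : 2 ≤ T) (hd : 1 ≤ d)
    (v₀ η ε : ℝ) (hv : 0 < v₀) (hε : 0 < ε)
    (g : ℕ → Fin d → ℝ) (v : ℕ → Fin d → ℝ)
    (h0 : ∀ i, v 0 i = v₀)
    (hrec : ∀ t, 1 ≤ t → t ≤ T → ∀ i,
      v t i = (1 - 1 / (T : ℝ)) * v (t - 1) i + (1 / (T : ℝ)) * (g t i) ^ 2)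
    (γ : ℕ → Fin d → ℝ)
    (hγ : ∀ t i, γ t i = (η / Real.sqrt T) / (Real.sqrt (v t i) + ε))
    (S : ℝ) (hS : S = v₀ * d + ∑ t ∈ Finset.Icc 1 T, ∑ i, (g t i) ^ 2) :
    ∑ t ∈ Finset.Icc 1 T, ∑ i, (γ t i) ^ 2 * (g t i) ^ 2
      ≤ 4 * η ^ 2 * d * Real.log (1 + S / (v₀ * d * T)) := by
  have : Nonempty (Fin d) := ⟨⟨0, hd⟩⟩
  set G : Fin d → ℝ := fun i => ∑ t ∈ Icc 1 T, g t i ^ 2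
  have hcoord : ∀ i, ∑ t ∈ Icc 1 T, γ t i ^ 2 * g t i ^ 2
      ≤ 4 * η ^ 2 * log (1 + G i / (T * v₀)) := fun i => by
      simp only [hγ]
      exact sum_sq_stepsize_mul_sq_le_log hT hv hε.le (h0 i)
        fun t ht => by simpa using hrec (t + 1) (by omega) (by omega) i
  have hjensen := sum_log_one_add_div_le (c := T * v₀) (by positivity) (y := G)
    fun i => by positivity
  have hG : (∑ i, G i) / (d * (T * v₀)) ≤ S / (v₀ * d * T) := by
    rw [hS, sum_comm, show (d : ℝ) * (T * v₀) = v₀ * d * T by ring]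
    gcongr
    exact le_add_of_nonneg_left (by positivity)
  calc ∑ t ∈ Icc 1 T, ∑ i, γ t i ^ 2 * g t i ^ 2
      = ∑ i, ∑ t ∈ Icc 1 T, γ t i ^ 2 * g t i ^ 2 := sum_comm
    _ ≤ 4 * η ^ 2 * ∑ i, log (1 + G i / (T * v₀)) := by
        rw [mul_sum]; exact sum_le_sum fun i _ => hcoord i
    _ ≤ 4 * η ^ 2 * (d * log (1 + (∑ i, G i) / (d * (T * v₀)))) := by
        gcongr; simpa using hjensen
    _ ≤ 4 * η ^ 2 * d * log (1 + S / (v₀ * d * T)) := by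
        rw [← mul_assoc]
        gcongr

theorem stmt_4 (T d : ℕ) (hT : 2 ≤ T) (hd : 1 ≤ d)
    (v₀ η ε : ℝ) (hv : 0 < v₀) (hη : 0 < η) (hε : 0 < ε)
    (g : ℕ → Fin d → ℝ) (v : ℕ → Fin d → ℝ)
    (h0 : ∀ i, v 0 i = v₀)
    (hrec : ∀ t, 1 ≤ t → t ≤ T → ∀ i,
      v t i = (1 - 1 / (T : ℝ)) * v (t - 1) i + (1 / (T : ℝ)) * (g t i) ^ 2)
    (γ : ℕ → Fin d → ℝ)
    (hγ : ∀ t i, γ t i = (η / Real.sqrt T) / (Real.sqrt (v t i) + ε))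
    (S : ℝ) (hS : S = v₀ * d + ∑ t ∈ Finset.Icc 1 T, ∑ i, (g t i) ^ 2) :
    ∑ t ∈ Finset.Icc 1 T, ∑ i, (γ t i) ^ 2 * (g t i) ^ 2
      ≤ 4 * η ^ 2 * d * Real.log (1 + S / (v₀ * d * T)) :=
  stmt_4_general T d hT hd v₀ η ε hv hε g v h0 hrec γ hγ S hS
end

section
/- Let β₁ ∈ [0,1), let γ_t, g_t ∈ ℝ^d (with γ_{t,i} > 0), and suppose γ_{t,i} ≤ 2 γ_{k,i} for all 1 ≤ k ≤ t and all coordinates i. Let m_t = (1-β₁) ∑_{k=1}^{t} β₁^{t-k} g_k. Then for every N ≥ 1, ∑_{t=1}^{N} ‖γ_t ⊙ m_t‖² ≤ 4 ∑_{t=1}^{N} ‖γ_t ⊙ g_t‖², where ⊙ denotes the coordinatewise (Hadamard) product. -/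
/-!
Write `m_t = (1 - β) ∑_{k ≤ t} β^{t-k} g_k`. Since the weights `(1 - β) β^{t-k}` have total mass
at most one, Jensen's inequality gives `(γ_t m_t)² ≤ (1 - β) ∑_{k ≤ t} β^{t-k} (γ_t g_k)²`, and the
comparison `γ_t ≤ 2 γ_k` turns this into `4 (1 - β) ∑_{k ≤ t} β^{t-k} (γ_k g_k)²`. Summing over
`t ≤ N` and exchanging the sums, each `(γ_k g_k)²` is weighted by `∑_{t ≥ k} β^{t-k} ≤ 1 / (1 - β)`.
-/

open Finset

noncomputable def expMovingAvg (β : ℝ) (x : ℕ → ℝ) (t : ℕ) : ℝ :=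
  (1 - β) * ∑ k ∈ Icc 1 t, β ^ (t - k) * x k

theorem mul_expMovingAvg (β c : ℝ) (x : ℕ → ℝ) (t : ℕ) :
    c * expMovingAvg β x t = expMovingAvg β (fun k => c * x k) t := by
  simp only [expMovingAvg, mul_sum]
  ring_nf

section

variable {β : ℝ}

theorem sum_pow_le_inv_one_sub_of_injOn (hβ₀ : 0 ≤ β) (hβ₁ : β < 1) {ι : Type*}
    {s : Finset ι} {e : ι → ℕ} (he : Set.InjOn e s) : ∑ k ∈ s, β ^ e k ≤ (1 - β)⁻¹ := by
  classical
  rw [← sum_image he, ← tsum_geometric_of_lt_one hβ₀ hβ₁]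
  exact (summable_geometric_of_lt_one hβ₀ hβ₁).sum_le_tsum _ fun j _ => pow_nonneg hβ₀ j

theorem sq_expMovingAvg_le (hβ₀ : 0 ≤ β) (hβ₁ : β < 1) (x : ℕ → ℝ) (t : ℕ) :
    expMovingAvg β x t ^ 2 ≤ (1 - β) * ∑ k ∈ Icc 1 t, β ^ (t - k) * x k ^ 2 := by
  have hweights : ∑ k ∈ Icc 1 t, β ^ (t - k) ≤ (1 - β)⁻¹ :=
    sum_pow_le_inv_one_sub_of_injOn hβ₀ hβ₁ fun k hk l hl (hkl : t - k = t - l) => by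
      simp only [coe_Icc, Set.mem_Icc] at hk hl
      omega
  have hjensen : (∑ k ∈ Icc 1 t, β ^ (t - k) * x k) ^ 2
      ≤ (∑ k ∈ Icc 1 t, β ^ (t - k)) * ∑ k ∈ Icc 1 t, β ^ (t - k) * x k ^ 2 :=
    sum_sq_le_sum_mul_sum_of_sq_le_mul _ (fun k _ => pow_nonneg hβ₀ _)
      (fun k _ => mul_nonneg (pow_nonneg hβ₀ _) (sq_nonneg _)) fun k _ => le_of_eq (by ring)
  have hpos : 0 < 1 - β := by linarith
  calc expMovingAvg β x t ^ 2 = (1 - β) ^ 2 * (∑ k ∈ Icc 1 t, β ^ (t - k) * x k) ^ 2 := by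
        rw [expMovingAvg, mul_pow]
    _ ≤ (1 - β) ^ 2 * ((1 - β)⁻¹ * ∑ k ∈ Icc 1 t, β ^ (t - k) * x k ^ 2) := by
        grw [hjensen, hweights]
    _ = (1 - β) * ∑ k ∈ Icc 1 t, β ^ (t - k) * x k ^ 2 := by field_simp

theorem sum_sum_pow_sub_mul_le (hβ₀ : 0 ≤ β) (hβ₁ : β < 1) (a : ℕ → ℝ) (ha : ∀ k, 0 ≤ a k)
    (N : ℕ) :
    ∑ t ∈ Icc 1 N, ∑ k ∈ Icc 1 t, β ^ (t - k) * a k ≤ (1 - β)⁻¹ * ∑ k ∈ Icc 1 N, a k := by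
  rw [sum_comm' (t' := Icc 1 N) (s' := fun k => Icc k N)
    (by intro t k; simp only [mem_Icc]; omega), mul_sum]
  refine sum_le_sum fun k _ => ?_
  rw [← sum_mul]
  refine mul_le_mul_of_nonneg_right ?_ (ha k)
  exact sum_pow_le_inv_one_sub_of_injOn hβ₀ hβ₁ fun t ht u hu (htu : t - k = u - k) => by
    simp only [coe_Icc, Set.mem_Icc] at ht hu
    omega

end

theorem sum_sq_mul_expMovingAvg_le {β : ℝ} (hβ₀ : 0 ≤ β) (hβ₁ : β < 1) (γ x : ℕ → ℝ)
    (hγ : ∀ t, 0 ≤ γ t) (hcomp : ∀ t k, 1 ≤ k → k ≤ t → γ t ≤ 2 * γ k) (N : ℕ) :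
    ∑ t ∈ Icc 1 N, (γ t * expMovingAvg β x t) ^ 2 ≤ 4 * ∑ t ∈ Icc 1 N, (γ t * x t) ^ 2 := by
  have hsq (t k : ℕ) (hk : k ∈ Icc 1 t) : (γ t * x k) ^ 2 ≤ 4 * (γ k * x k) ^ 2 := by
    rw [mem_Icc] at hk
    have : γ t ^ 2 ≤ (2 * γ k) ^ 2 := pow_le_pow_left₀ (hγ t) (hcomp t k hk.1 hk.2) 2
    nlinarith [sq_nonneg (x k)]
  have hpos : 0 < 1 - β := by linarith
  calc ∑ t ∈ Icc 1 N, (γ t * expMovingAvg β x t) ^ 2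
      ≤ ∑ t ∈ Icc 1 N, (1 - β) * ∑ k ∈ Icc 1 t, β ^ (t - k) * (γ t * x k) ^ 2 := by
        gcongr with t
        rw [mul_expMovingAvg]
        exact sq_expMovingAvg_le hβ₀ hβ₁ _ t
    _ ≤ ∑ t ∈ Icc 1 N, (1 - β) * ∑ k ∈ Icc 1 t, β ^ (t - k) * (4 * (γ k * x k) ^ 2) := by
        gcongr with t _ k hk
        exact hsq t k hk
    _ = 4 * (1 - β) * ∑ t ∈ Icc 1 N, ∑ k ∈ Icc 1 t, β ^ (t - k) * (γ k * x k) ^ 2 := by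
        simp only [mul_sum]
        ring_nf
    _ ≤ 4 * (1 - β) * ((1 - β)⁻¹ * ∑ k ∈ Icc 1 N, (γ k * x k) ^ 2) := by
        grw [sum_sum_pow_sub_mul_le hβ₀ hβ₁ _ fun k => sq_nonneg _]
    _ = 4 * ∑ t ∈ Icc 1 N, (γ t * x t) ^ 2 := by field_simp

theorem stmt_6_general (d N : ℕ) (β₁ : ℝ) (h0 : 0 ≤ β₁) (h1 : β₁ < 1)
    (γ g : ℕ → Fin d → ℝ)
    (hγpos : ∀ t i, 0 < γ t i)
    (hcomp : ∀ t k, 1 ≤ k → k ≤ t → ∀ i, γ t i ≤ 2 * γ k i)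
    (m : ℕ → Fin d → ℝ)
    (hm : ∀ t i, m t i = (1 - β₁) * ∑ k ∈ Finset.Icc 1 t, β₁ ^ (t - k) * g k i) :
    ∑ t ∈ Finset.Icc 1 N, ∑ i, (γ t i * m t i) ^ 2
      ≤ 4 * ∑ t ∈ Finset.Icc 1 N, ∑ i, (γ t i * g t i) ^ 2 := by
  have hm' (t : ℕ) (i : Fin d) : m t i = expMovingAvg β₁ (fun k => g k i) t := hm t i
  rw [sum_comm, sum_comm (s := Icc 1 N), mul_sum]
  refine sum_le_sum fun i _ => ?_
  simp only [hm']
  exact sum_sq_mul_expMovingAvg_le h0 h1 (fun t => γ t i) (fun k => g k i)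
    (fun t => (hγpos t i).le) (fun t k hk hkt => hcomp t k hk hkt i) N

theorem stmt_6 (d N : ℕ) (hN : 1 ≤ N) (β₁ : ℝ) (h0 : 0 ≤ β₁) (h1 : β₁ < 1)
    (γ g : ℕ → Fin d → ℝ)
    (hγpos : ∀ t i, 0 < γ t i)
    (hcomp : ∀ t k, 1 ≤ k → k ≤ t → ∀ i, γ t i ≤ 2 * γ k i)
    (m : ℕ → Fin d → ℝ)
    (hm : ∀ t i, m t i = (1 - β₁) * ∑ k ∈ Finset.Icc 1 t, β₁ ^ (t - k) * g k i) :
    ∑ t ∈ Finset.Icc 1 N, ∑ i, (γ t i * m t i) ^ 2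
      ≤ 4 * ∑ t ∈ Finset.Icc 1 N, ∑ i, (γ t i * g t i) ^ 2 :=
  stmt_6_general d N β₁ h0 h1 γ g hγpos hcomp m hm
end

section
/- Let β₂ ∈ (0,1), v > 0, and let g_1,...,g_T ∈ ℝ be arbitrary reals. Define v_t = β₂ v_{t-1} + (1-β₂) g_t² with v_0 = v. Then ∑_{t=1}^{T} g_t²/v_t ≤ (1/(1-β₂)) log(1 + ((1-β₂)/v) ∑_{t=1}^{T} β₂^{-t} g_t²). -/
/-!
Rescaling the second-moment recursion by `β₂⁻ᵗ` turns it into the increasing partial sums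
`C t = β₂⁻ᵗ v t = v₀ + (1 - β₂) ∑_{s ≤ t} β₂⁻ˢ g s ^ 2`, and each summand becomes
`g t ^ 2 / v t = (C t - C (t - 1)) / ((1 - β₂) C t)`. Since `(b - a) / b ≤ log (b / a)`,
the sum is at most `(1 - β₂)⁻¹ log (C T / C 0)` by telescoping.
-/

open Finset Real

theorem Finset.sum_Icc_one_sub_pred {M : Type*} [AddCommGroup M] (f : ℕ → M) (T : ℕ) :
    ∑ t ∈ Icc 1 T, (f t - f (t - 1)) = f T - f 0 := by
  induction T with
  | zero => simp
  | succ T ih =>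
    rw [sum_Icc_succ_top (by omega), ih, Nat.add_sub_cancel]
    abel

theorem Real.sub_div_le_log_div {a b : ℝ} (ha : 0 < a) (hb : 0 < b) :
    (b - a) / b ≤ log (b / a) := by
  have h := one_sub_inv_le_log_of_pos (div_pos hb ha)
  rwa [inv_div, one_sub_div hb.ne'] at h

theorem Real.sum_sub_div_le_log_div {C : ℕ → ℝ} (hC : ∀ t, 0 < C t) (T : ℕ) :
    ∑ t ∈ Icc 1 T, (C t - C (t - 1)) / C t ≤ log (C T / C 0) := by
  calc ∑ t ∈ Icc 1 T, (C t - C (t - 1)) / C t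
      ≤ ∑ t ∈ Icc 1 T, (log (C t) - log (C (t - 1))) :=
        sum_le_sum fun t _ => by
          rw [← log_div (hC t).ne' (hC _).ne']
          exact sub_div_le_log_div (hC _) (hC t)
    _ = log (C T / C 0) := by
        rw [sum_Icc_one_sub_pred (fun t => log (C t)), log_div (hC T).ne' (hC 0).ne']

namespace Adam

noncomputable def rescaled (β₂ : ℝ) (v : ℕ → ℝ) (t : ℕ) : ℝ := β₂ ^ (-(t : ℤ)) * v t

variable {β₂ : ℝ} {g v : ℕ → ℝ}

@[simp]
theorem rescaled_zero : rescaled β₂ v 0 = v 0 := by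
  simp [rescaled]

theorem rescaled_sub_pred (hβ : β₂ ≠ 0)
    (hrec : ∀ t, 1 ≤ t → v t = β₂ * v (t - 1) + (1 - β₂) * (g t) ^ 2) {t : ℕ} (ht : 1 ≤ t) :
    rescaled β₂ v t - rescaled β₂ v (t - 1) = (1 - β₂) * (β₂ ^ (-(t : ℤ)) * g t ^ 2) := by
  obtain ⟨n, rfl⟩ : ∃ n, t = n + 1 := ⟨t - 1, by omega⟩
  have hpow : β₂ ^ (-((n : ℕ) : ℤ)) = β₂ ^ (-((n + 1 : ℕ) : ℤ)) * β₂ := by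
    rw [← zpow_add_one₀ hβ]
    push_cast
    ring_nf
  rw [rescaled, rescaled, hrec (n + 1) ht, Nat.add_sub_cancel, hpow]
  ring

theorem rescaled_eq_add_sum (hβ : β₂ ≠ 0)
    (hrec : ∀ t, 1 ≤ t → v t = β₂ * v (t - 1) + (1 - β₂) * (g t) ^ 2) (T : ℕ) :
    rescaled β₂ v T = v 0 + (1 - β₂) * ∑ t ∈ Icc 1 T, β₂ ^ (-(t : ℤ)) * g t ^ 2 := by
  have htel := sum_Icc_one_sub_pred (rescaled β₂ v) T
  rw [sum_congr rfl fun t ht => rescaled_sub_pred hβ hrec (mem_Icc.mp ht).1, ← mul_sum]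
    at htel
  rw [htel, rescaled_zero]
  ring

theorem rescaled_pos (hβ0 : 0 < β₂) (hβ1 : β₂ ≤ 1) (hv : 0 < v 0)
    (hrec : ∀ t, 1 ≤ t → v t = β₂ * v (t - 1) + (1 - β₂) * (g t) ^ 2) (T : ℕ) :
    0 < rescaled β₂ v T := by
  rw [rescaled_eq_add_sum hβ0.ne' hrec]
  have : 0 ≤ 1 - β₂ := by linarith
  positivity

theorem sq_div_eq_rescaled_sub_div (hβ : β₂ ≠ 0) (hβ1 : β₂ ≠ 1)
    (hrec : ∀ t, 1 ≤ t → v t = β₂ * v (t - 1) + (1 - β₂) * (g t) ^ 2) {t : ℕ} (ht : 1 ≤ t) :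
    g t ^ 2 / v t
      = (rescaled β₂ v t - rescaled β₂ v (t - 1)) / ((1 - β₂) * rescaled β₂ v t) := by
  rw [rescaled_sub_pred hβ hrec ht, rescaled, mul_div_mul_left _ _ (sub_ne_zero.mpr hβ1.symm),
    mul_div_mul_left _ _ (zpow_ne_zero _ hβ)]

end Adam

open Adam in
theorem stmt_10 (T : ℕ) (β₂ v₀ : ℝ) (hβ0 : 0 < β₂) (hβ1 : β₂ < 1) (hv : 0 < v₀)
    (g : ℕ → ℝ) (v : ℕ → ℝ) (h0 : v 0 = v₀)
    (hrec : ∀ t, 1 ≤ t → v t = β₂ * v (t - 1) + (1 - β₂) * (g t) ^ 2) :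
    ∑ t ∈ Finset.Icc 1 T, (g t) ^ 2 / v t
      ≤ (1 / (1 - β₂)) *
        Real.log (1 + ((1 - β₂) / v₀) * ∑ t ∈ Finset.Icc 1 T, β₂ ^ (-(t : ℤ)) * (g t) ^ 2) := by
  subst h0
  have hratio : rescaled β₂ v T / rescaled β₂ v 0
      = 1 + ((1 - β₂) / v 0) * ∑ t ∈ Icc 1 T, β₂ ^ (-(t : ℤ)) * g t ^ 2 := by
    rw [rescaled_eq_add_sum hβ0.ne' hrec T, rescaled_zero, add_div, div_self hv.ne',
      mul_div_right_comm]
  set C := rescaled β₂ v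
  have hC : ∀ t, 0 < C t := rescaled_pos hβ0 hβ1.le hv hrec
  calc ∑ t ∈ Icc 1 T, g t ^ 2 / v t
      = 1 / (1 - β₂) * ∑ t ∈ Icc 1 T, (C t - C (t - 1)) / C t := by
        rw [mul_sum]
        refine sum_congr rfl fun t ht => ?_
        rw [sq_div_eq_rescaled_sub_div hβ0.ne' hβ1.ne hrec (mem_Icc.mp ht).1,
          div_mul_div_comm, one_mul]
    _ ≤ 1 / (1 - β₂) * log (C T / C 0) :=
        mul_le_mul_of_nonneg_left (sum_sub_div_le_log_div hC T)
          (one_div_pos.mpr (sub_pos.mpr hβ1)).le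
    _ = _ := by rw [hratio]
end

section
/- Let (Ω, F, (F_n), P) be a filtered probability space and (Z_n) a nonnegative adapted integrable process. Define X_n = ∑_{k=1}^n Z_k and Y_n = ∑_{k=1}^n E[Z_k | F_{k-1}]. Then for any bounded stopping time μ, any deterministic n, and any real s ≥ 1, ‖Y_{μ∧n}‖_{L^s} ≤ s ‖X_{μ∧n}‖_{L^s}. -/
/-!
Put `W = X_{μ∧n} = ∑_{j<n} 1{j<μ} Z_{j+1}` and let `A_k = ∑_{j<k} 1{j<μ} E[Z_{j+1} | ℱ_j]` be its
predictable compensator, so `A_n = Y_{μ∧n}`. Since `{j < μ} ∈ ℱ_j`, pulling bounded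
`ℱ_j`-measurable factors out of the conditional expectations gives the domination
`E[(A_n - A_k) G] ≤ E[W G]` for bounded nonnegative `ℱ_k`-measurable `G`.

For `a = A_n ∧ c`, convexity of `x ↦ x^s` gives pathwise
`a^s ≤ s ∑_k (A_{k+1} - A_k) (A_{k+1} ∧ c)^{s-1}`. The weights are nondecreasing, bounded and
predictable, so after summation by parts the domination applies to each weight increment:
`E[a^s] ≤ s E[W a^{s-1}] ≤ s ‖W‖_s ‖a‖_s^{s-1}` by Hölder. Hence
`‖A_n ∧ c‖_s ≤ s ‖W‖_s`, and Fatou's lemma lets `c → ∞`.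
-/

open MeasureTheory Finset Filter
open scoped ENNReal

lemma rpow_sub_rpow_le_mul_rpow_sub_one {a b s : ℝ} (hb : 0 ≤ b) (hba : b ≤ a) (hs : 1 ≤ s) :
    a ^ s - b ^ s ≤ s * a ^ (s - 1) * (a - b) := by
  rcases (hb.trans hba).eq_or_lt with rfl | ha
  · obtain rfl : b = 0 := le_antisymm hba hb
    simp
  have hbern := one_add_mul_self_le_rpow_one_add (s := b / a - 1)
    (by linarith [div_nonneg hb ha.le]) hs
  rw [add_sub_cancel, Real.div_rpow hb ha.le, le_div_iff₀ (by positivity)] at hbern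
  have hpow : a ^ s = a ^ (s - 1) * a := by rw [← Real.rpow_add_one ha.ne']; ring_nf
  rw [hpow] at hbern ⊢
  field_simp at hbern
  nlinarith

lemma min_sub_min_le_sub {x y c : ℝ} (h : y ≤ x) : min x c - min y c ≤ x - y := by
  simp only [min_def]; split_ifs <;> linarith

lemma min_rpow_le_sum_sub_mul {A : ℕ → ℝ} (hA : Monotone A) (hA0 : A 0 = 0) {c s : ℝ}
    (hc : 0 ≤ c) (hs : 1 ≤ s) (n : ℕ) :
    min (A n) c ^ s ≤ s * ∑ k ∈ range n, (A (k + 1) - A k) * min (A (k + 1)) c ^ (s - 1) := by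
  set a : ℕ → ℝ := fun k => min (A k) c
  have ha_nonneg k : 0 ≤ a k := le_min (hA0 ▸ hA k.zero_le) hc
  have ha_mono k : a k ≤ a (k + 1) := min_le_min_right c (hA k.le_succ)
  have ha0 : a 0 ^ s = 0 := by simp [a, hA0, hc, Real.zero_rpow (by linarith : s ≠ 0)]
  calc a n ^ s = ∑ k ∈ range n, (a (k + 1) ^ s - a k ^ s) := by
        rw [sum_range_sub (fun k => a k ^ s), ha0, sub_zero]
    _ ≤ ∑ k ∈ range n, s * a (k + 1) ^ (s - 1) * (a (k + 1) - a k) :=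
        sum_le_sum fun k _ => rpow_sub_rpow_le_mul_rpow_sub_one (ha_nonneg k) (ha_mono k) hs
    _ ≤ ∑ k ∈ range n, s * a (k + 1) ^ (s - 1) * (A (k + 1) - A k) := by
        refine sum_le_sum fun k _ => mul_le_mul_of_nonneg_left ?_ ?_
        · exact min_sub_min_le_sub (hA k.le_succ)
        · exact mul_nonneg (by linarith) (Real.rpow_nonneg (ha_nonneg _) _)
    _ = s * ∑ k ∈ range n, (A (k + 1) - A k) * a (k + 1) ^ (s - 1) := by
        rw [mul_sum]; exact sum_congr rfl fun k _ => by ring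

lemma sum_range_sub_mul_eq {R : Type*} [CommRing R] (a g : ℕ → R) (n : ℕ) :
    ∑ k ∈ range n, (a (k + 1) - a k) * g (k + 1) =
      ∑ k ∈ range n, (a n - a k) * (g (k + 1) - g k) + (a n - a 0) * g 0 := by
  induction n with
  | zero => simp
  | succ n ih =>
    have hsplit : ∑ k ∈ range n, (a (n + 1) - a k) * (g (k + 1) - g k) =
        ∑ k ∈ range n, (a n - a k) * (g (k + 1) - g k) + (a (n + 1) - a n) * (g n - g 0) := by
      rw [← sum_range_sub g n, mul_sum, ← sum_add_distrib]
      exact sum_congr rfl fun k _ => by ring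
    rw [sum_range_succ, ih, sum_range_succ, hsplit]
    ring

lemma sum_Icc_one_min_eq_sum_range_ite {M : Type*} [AddCommMonoid M] (f : ℕ → M) (m n : ℕ) :
    ∑ k ∈ Icc 1 (min m n), f k = ∑ j ∈ range n, if j < m then f (j + 1) else 0 := by
  rw [← sum_filter, ← Ico_add_one_right_eq_Icc, ← sum_Ico_add' f 0 (min m n) 1, ← range_eq_Ico]
  congr 1
  ext j
  simp only [mem_range, mem_filter]
  omega

lemma rpow_one_div_le_of_le_mul_rpow {T K s : ℝ} (hT : 0 ≤ T) (hK : 0 ≤ K) (hs : 1 ≤ s)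
    (h : T ≤ K * T ^ (1 - 1 / s)) : T ^ (1 / s) ≤ K := by
  rcases hT.eq_or_lt with rfl | hT
  · rwa [Real.zero_rpow (by positivity)]
  have hsplit : T ^ (1 / s) * T ^ (1 - 1 / s) = T := by rw [← Real.rpow_add hT]; norm_num
  refine le_of_mul_le_mul_right ?_ (by positivity : 0 < T ^ (1 - 1 / s))
  rwa [hsplit]

section

variable {Ω : Type*} {m0 : MeasurableSpace Ω} {P : Measure Ω}

lemma eLpNorm_ofReal_eq_integral_rpow {f : Ω → ℝ} {s : ℝ} (hs : 0 < s) (hf : 0 ≤ f)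
    (hfm : MemLp f (.ofReal s) P) :
    eLpNorm f (.ofReal s) P = .ofReal ((∫ ω, f ω ^ s ∂P) ^ (1 / s)) := by
  rw [hfm.eLpNorm_eq_integral_rpow_norm (by simpa using hs) ENNReal.ofReal_ne_top,
    ENNReal.toReal_ofReal hs.le, one_div]
  simp_rw [Real.norm_of_nonneg (hf _)]

lemma integral_mul_rpow_sub_one_le {f g : Ω → ℝ} {s : ℝ} (hs : 1 ≤ s) (hf : 0 ≤ f) (hg : 0 ≤ g)
    (hfm : MemLp f (.ofReal s) P) (hgm : MemLp g (.ofReal s) P) :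
    ∫ ω, f ω * g ω ^ (s - 1) ∂P ≤
      (∫ ω, f ω ^ s ∂P) ^ (1 / s) * (∫ ω, g ω ^ s ∂P) ^ (1 - 1 / s) := by
  rcases hs.eq_or_lt with rfl | hs
  · simp
  have hconj : s.HolderConjugate (s / (s - 1)) := .conjExponent hs
  have hgq : MemLp (fun ω => g ω ^ (s - 1)) (.ofReal (s / (s - 1))) P := by
    have h := hgm.norm_rpow_div (.ofReal (s - 1))
    rw [ENNReal.toReal_ofReal (by linarith), ← ENNReal.ofReal_div_of_pos (by linarith)] at h
    simpa only [Real.norm_of_nonneg (hg _)] using h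
  have hpow ω : (g ω ^ (s - 1)) ^ (s / (s - 1)) = g ω ^ s := by
    rw [← Real.rpow_mul (hg ω), mul_div_cancel₀ _ (by linarith : s - 1 ≠ 0)]
  have hinv : 1 / (s / (s - 1)) = 1 - 1 / s := by field_simp
  simpa only [hpow, hinv] using integral_mul_le_Lp_mul_Lq_of_nonneg hconj (ae_of_all _ hf)
    (ae_of_all _ fun ω => Real.rpow_nonneg (hg ω) _) hfm hgq

-- the weak form of `E[A n - A k | ℱ k] ≤ E[W | ℱ k]` for all `k ≤ n`
def IncrementsDominated (ℱ : Filtration ℕ m0) (P : Measure Ω) (A : ℕ → Ω → ℝ) (W : Ω → ℝ)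
    (n : ℕ) : Prop :=
  ∀ k ≤ n, ∀ (G : Ω → ℝ) (C : ℝ), StronglyMeasurable[ℱ k] G → (∀ ω, 0 ≤ G ω) →
    (∀ ω, G ω ≤ C) → ∫ ω, (A n ω - A k ω) * G ω ∂P ≤ ∫ ω, W ω * G ω ∂P

namespace IncrementsDominated

variable {ℱ : Filtration ℕ m0} {A : ℕ → Ω → ℝ} {W : Ω → ℝ} {n : ℕ}

lemma integral_sum_sub_mul_le (hdom : IncrementsDominated ℱ P A W n)
    (hA : ∀ k, Integrable (A k) P) (hW : Integrable W P) {G : ℕ → Ω → ℝ} {C : ℝ}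
    (hG0 : StronglyMeasurable[ℱ 0] (G 0)) (hG : ∀ k, StronglyMeasurable[ℱ k] (G (k + 1)))
    (hG_nonneg : ∀ k ω, 0 ≤ G k ω) (hG_mono : ∀ k ω, G k ω ≤ G (k + 1) ω)
    (hG_le : ∀ k ω, G k ω ≤ C) :
    ∫ ω, ∑ k ∈ range n, (A (k + 1) ω - A k ω) * G (k + 1) ω ∂P ≤ ∫ ω, W ω * G n ω ∂P := by
  set dG : ℕ → Ω → ℝ := fun k ω => G (k + 1) ω - G k ω
  have hGk : ∀ k, StronglyMeasurable[ℱ k] (G k)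
    | 0 => hG0
    | k + 1 => (hG k).mono (ℱ.mono k.le_succ)
  have hdG k : StronglyMeasurable[ℱ k] (dG k) := (hG k).sub (hGk k)
  have hdG_le k ω : dG k ω ≤ C := by linarith [hG_le (k + 1) ω, hG_nonneg k ω]
  have hdG_nonneg k ω : 0 ≤ dG k ω := sub_nonneg.2 (hG_mono k ω)
  have hint {f H : Ω → ℝ} {k : ℕ} (hf : Integrable f P) (hH : StronglyMeasurable[ℱ k] H)
      (hH0 : ∀ ω, 0 ≤ H ω) (hHC : ∀ ω, H ω ≤ C) : Integrable (fun ω => f ω * H ω) P :=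
    hf.mul_bdd ((hH.mono (ℱ.le k)).aestronglyMeasurable)
      (ae_of_all _ fun ω => by rw [Real.norm_of_nonneg (hH0 ω)]; exact hHC ω)
  have hAn k : Integrable (fun ω => A n ω - A k ω) P := (hA n).sub (hA k)
  calc ∫ ω, ∑ k ∈ range n, (A (k + 1) ω - A k ω) * G (k + 1) ω ∂P
      = ∫ ω, ∑ k ∈ range n, (A n ω - A k ω) * dG k ω + (A n ω - A 0 ω) * G 0 ω ∂P := by
        exact integral_congr_ae (ae_of_all _ fun ω => sum_range_sub_mul_eq (A · ω) (G · ω) n)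
    _ = ∑ k ∈ range n, ∫ ω, (A n ω - A k ω) * dG k ω ∂P + ∫ ω, (A n ω - A 0 ω) * G 0 ω ∂P := by
        rw [integral_add (integrable_finsetSum _ fun k _ => hint (hAn k) (hdG k)
          (hdG_nonneg k) (hdG_le k)) (hint (hAn 0) hG0 (hG_nonneg 0) (hG_le 0)),
          integral_finsetSum _ fun k _ => hint (hAn k) (hdG k) (hdG_nonneg k) (hdG_le k)]
    _ ≤ ∑ k ∈ range n, ∫ ω, W ω * dG k ω ∂P + ∫ ω, W ω * G 0 ω ∂P := by
        refine add_le_add (sum_le_sum fun k hk => ?_)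
          (hdom 0 n.zero_le _ C hG0 (hG_nonneg 0) (hG_le 0))
        exact hdom k (mem_range.1 hk).le _ C (hdG k) (hdG_nonneg k) (hdG_le k)
    _ = ∫ ω, ∑ k ∈ range n, W ω * dG k ω + W ω * G 0 ω ∂P := by
        rw [integral_add (integrable_finsetSum _ fun k _ => hint hW (hdG k)
          (hdG_nonneg k) (hdG_le k)) (hint hW hG0 (hG_nonneg 0) (hG_le 0)),
          integral_finsetSum _ fun k _ => hint hW (hdG k) (hdG_nonneg k) (hdG_le k)]
    _ = ∫ ω, W ω * G n ω ∂P := by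
        refine integral_congr_ae (ae_of_all _ fun ω => ?_)
        simp only [dG]
        rw [← mul_sum, sum_range_sub (G · ω), ← mul_add, sub_add_cancel]

lemma integral_min_rpow_le (hdom : IncrementsDominated ℱ P A W n)
    (hA : ∀ k, Integrable (A k) P) (hW : Integrable W P) (hA_mono : ∀ ω, Monotone (A · ω))
    (hA0 : ∀ ω, A 0 ω = 0) (hA_pred : ∀ k, StronglyMeasurable[ℱ k] (A (k + 1)))
    {c s : ℝ} (hc : 0 ≤ c) (hs : 1 ≤ s) :
    ∫ ω, min (A n ω) c ^ s ∂P ≤ s * ∫ ω, W ω * min (A n ω) c ^ (s - 1) ∂P := by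
  set G : ℕ → Ω → ℝ := fun k ω => min (A k ω) c ^ (s - 1)
  have hA_nonneg k ω : 0 ≤ A k ω := (hA0 ω).symm.trans_le (hA_mono ω k.zero_le)
  have hG_nonneg k ω : 0 ≤ G k ω := Real.rpow_nonneg (le_min (hA_nonneg k ω) hc) _
  have hG_mono k ω : G k ω ≤ G (k + 1) ω :=
    Real.rpow_le_rpow (le_min (hA_nonneg k ω) hc) (min_le_min_right c (hA_mono ω k.le_succ))
      (by linarith)
  have hG_le k ω : G k ω ≤ c ^ (s - 1) :=
    Real.rpow_le_rpow (le_min (hA_nonneg k ω) hc) (min_le_right _ _) (by linarith)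
  have hG0 : StronglyMeasurable[ℱ 0] (G 0) := by
    simp only [G, hA0]
    exact stronglyMeasurable_const
  have hG k : StronglyMeasurable[ℱ k] (G (k + 1)) :=
    (((hA_pred k).measurable.min measurable_const).pow_const _).stronglyMeasurable
  have hsum_int : Integrable (fun ω => ∑ k ∈ range n, (A (k + 1) ω - A k ω) * G (k + 1) ω) P :=
    integrable_finsetSum _ fun k _ => ((hA (k + 1)).sub (hA k)).mul_bdd
      (((hG k).mono (ℱ.le k)).aestronglyMeasurable)
      (ae_of_all _ fun ω => by rw [Real.norm_of_nonneg (hG_nonneg _ ω)]; exact hG_le _ ω)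
  calc ∫ ω, min (A n ω) c ^ s ∂P
      ≤ ∫ ω, s * ∑ k ∈ range n, (A (k + 1) ω - A k ω) * G (k + 1) ω ∂P :=
        integral_mono_of_nonneg
          (ae_of_all _ fun ω => Real.rpow_nonneg (le_min (hA_nonneg n ω) hc) _)
          (hsum_int.const_mul s)
          (ae_of_all _ fun ω => min_rpow_le_sum_sub_mul (hA_mono ω) (hA0 ω) hc hs n)
    _ ≤ s * ∫ ω, W ω * G n ω ∂P := by
        rw [integral_const_mul]
        exact mul_le_mul_of_nonneg_left (hdom.integral_sum_sub_mul_le hA hW hG0 hG hG_nonneg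
          hG_mono hG_le) (by linarith)

variable [IsFiniteMeasure P]

lemma eLpNorm_min_le (hdom : IncrementsDominated ℱ P A W n)
    (hA : ∀ k, Integrable (A k) P) (hW : Integrable W P) (hW_nonneg : 0 ≤ W)
    (hA_mono : ∀ ω, Monotone (A · ω)) (hA0 : ∀ ω, A 0 ω = 0)
    (hA_pred : ∀ k, StronglyMeasurable[ℱ k] (A (k + 1))) {c s : ℝ} (hc : 0 ≤ c) (hs : 1 ≤ s) :
    eLpNorm (fun ω => min (A n ω) c) (.ofReal s) P ≤ .ofReal s * eLpNorm W (.ofReal s) P := by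
  by_cases hW_top : eLpNorm W (.ofReal s) P = ∞
  · rw [hW_top, ENNReal.mul_top (by simp; linarith)]
    exact le_top
  have hWs : MemLp W (.ofReal s) P := ⟨hW.aestronglyMeasurable, lt_top_iff_ne_top.2 hW_top⟩
  set a : Ω → ℝ := fun ω => min (A n ω) c
  have ha_nonneg : 0 ≤ a := fun ω => le_min ((hA0 ω).symm.trans_le (hA_mono ω n.zero_le)) hc
  have has : MemLp a (.ofReal s) P :=
    .of_bound ((hA n).aestronglyMeasurable.inf aestronglyMeasurable_const) c
      (ae_of_all _ fun ω => by rw [Real.norm_of_nonneg (ha_nonneg ω)]; exact min_le_right _ _)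
  set T := ∫ ω, a ω ^ s ∂P
  set K := (∫ ω, W ω ^ s ∂P) ^ (1 / s)
  have hK : 0 ≤ K := Real.rpow_nonneg (integral_nonneg fun ω => Real.rpow_nonneg (hW_nonneg ω) _) _
  have hT : T ≤ s * K * T ^ (1 - 1 / s) := by
    calc T ≤ s * ∫ ω, W ω * a ω ^ (s - 1) ∂P :=
          hdom.integral_min_rpow_le hA hW hA_mono hA0 hA_pred hc hs
      _ ≤ s * (K * T ^ (1 - 1 / s)) := mul_le_mul_of_nonneg_left
          (integral_mul_rpow_sub_one_le hs hW_nonneg ha_nonneg hWs has) (by linarith)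
      _ = s * K * T ^ (1 - 1 / s) := by ring
  have hTK := rpow_one_div_le_of_le_mul_rpow
    (integral_nonneg fun ω => Real.rpow_nonneg (ha_nonneg ω) _) (by positivity) hs hT
  rw [eLpNorm_ofReal_eq_integral_rpow (by linarith) ha_nonneg has,
    eLpNorm_ofReal_eq_integral_rpow (by linarith) hW_nonneg hWs, ← ENNReal.ofReal_mul (by linarith)]
  exact ENNReal.ofReal_le_ofReal hTK

theorem eLpNorm_le (hdom : IncrementsDominated ℱ P A W n)
    (hA : ∀ k, Integrable (A k) P) (hW : Integrable W P) (hW_nonneg : 0 ≤ W)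
    (hA_mono : ∀ ω, Monotone (A · ω)) (hA0 : ∀ ω, A 0 ω = 0)
    (hA_pred : ∀ k, StronglyMeasurable[ℱ k] (A (k + 1))) {s : ℝ} (hs : 1 ≤ s) :
    eLpNorm (A n) (.ofReal s) P ≤ .ofReal s * eLpNorm W (.ofReal s) P := by
  have htendsto ω : Tendsto (fun m : ℕ => min (A n ω) m) atTop (nhds (A n ω)) :=
    tendsto_const_nhds.congr' <| (eventually_ge_atTop ⌈A n ω⌉₊).mono fun m hm =>
      (min_eq_left ((Nat.le_ceil _).trans (by exact_mod_cast hm))).symm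
  calc eLpNorm (A n) (.ofReal s) P
      ≤ atTop.liminf fun m : ℕ => eLpNorm (fun ω => min (A n ω) m) (.ofReal s) P :=
        Lp.eLpNorm_lim_le_liminf_eLpNorm
          (fun m => (hA n).aestronglyMeasurable.inf aestronglyMeasurable_const) _
          (ae_of_all _ htendsto)
    _ ≤ .ofReal s * eLpNorm W (.ofReal s) P := liminf_le_of_frequently_le' <|
        .of_forall fun m => hdom.eLpNorm_min_le hA hW hW_nonneg hA_mono hA0 hA_pred m.cast_nonneg hs

end IncrementsDominated

lemma integral_mul_condExp_of_bound [IsFiniteMeasure P] {m : MeasurableSpace Ω} (hm : m ≤ m0)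
    {f H : Ω → ℝ} {C : ℝ} (hH : StronglyMeasurable[m] H) (hHC : ∀ ω, |H ω| ≤ C)
    (hf : Integrable f P) :
    ∫ ω, H ω * P[f|m] ω ∂P = ∫ ω, H ω * f ω ∂P := by
  calc ∫ ω, H ω * P[f|m] ω ∂P = ∫ ω, P[H * f|m] ω ∂P :=
        integral_congr_ae
          (condExp_stronglyMeasurable_mul_of_bound hm hH hf C (ae_of_all _ hHC)).symm
    _ = ∫ ω, H ω * f ω ∂P := integral_condExp hm

lemma integral_indicator_condExp_mul [IsFiniteMeasure P] {m : MeasurableSpace Ω} (hm : m ≤ m0)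
    {S : Set Ω} (hS : MeasurableSet[m] S) {f G : Ω → ℝ} {C : ℝ} (hG : StronglyMeasurable[m] G)
    (hGC : ∀ ω, |G ω| ≤ C) (hf : Integrable f P) :
    ∫ ω, S.indicator (P[f|m]) ω * G ω ∂P = ∫ ω, S.indicator f ω * G ω ∂P := by
  have hswap (g : Ω → ℝ) ω : S.indicator g ω * G ω = S.indicator G ω * g ω := by
    by_cases h : ω ∈ S <;> simp [h, mul_comm]
  have hSG ω : |S.indicator G ω| ≤ C := by
    by_cases h : ω ∈ S
    · simpa [h] using hGC ω
    · simpa [h] using (abs_nonneg _).trans (hGC ω)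
  simp_rw [hswap]
  exact integral_mul_condExp_of_bound hm (hG.indicator hS) hSG hf

section Compensator

variable [IsFiniteMeasure P] {ℱ : Filtration ℕ m0} {Z : ℕ → Ω → ℝ} {S : ℕ → Set Ω}

-- Taking the positive part changes the compensator only on a null set and makes it monotone
-- everywhere.
lemma incrementsDominated_compensator (hZ_nonneg : ∀ k ω, 0 ≤ Z k ω)
    (hZ : ∀ k, Integrable (Z k) P) (hS : ∀ j, MeasurableSet[ℱ j] (S j)) (n : ℕ) :
    IncrementsDominated ℱ P
      (fun k ω => ∑ j ∈ range k, (S j).indicator (fun ω => max (P[Z (j + 1)|ℱ j] ω) 0) ω)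
      (fun ω => ∑ j ∈ range n, (S j).indicator (Z (j + 1)) ω) n := by
  intro k hk G C hG hG_nonneg hG_le
  set ζ : ℕ → Ω → ℝ := fun j ω => max (P[Z (j + 1)|ℱ j] ω) 0
  have hGm : AEStronglyMeasurable G P := (hG.mono (ℱ.le k)).aestronglyMeasurable
  have hGC : ∀ᵐ ω ∂P, ‖G ω‖ ≤ C :=
    ae_of_all _ fun ω => by rw [Real.norm_of_nonneg (hG_nonneg ω)]; exact hG_le ω
  have hζ j : Integrable ((S j).indicator (ζ j)) P :=
    integrable_condExp.pos_part.indicator (ℱ.le j _ (hS j))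
  have hZS j : Integrable ((S j).indicator (Z (j + 1))) P := (hZ _).indicator (ℱ.le j _ (hS j))
  have hterm j (hj : k ≤ j) : ∫ ω, (S j).indicator (ζ j) ω * G ω ∂P =
      ∫ ω, (S j).indicator (Z (j + 1)) ω * G ω ∂P := by
    rw [← integral_indicator_condExp_mul (ℱ.le j) (hS j) (hG.mono (ℱ.mono hj))
      (fun ω => (abs_of_nonneg (hG_nonneg ω)).trans_le (hG_le ω)) (hZ (j + 1))]
    refine integral_congr_ae ?_
    filter_upwards [condExp_nonneg (m := ℱ j) (ae_of_all P (hZ_nonneg (j + 1)))] with ω hω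
    rw [Pi.zero_apply] at hω
    by_cases h : ω ∈ S j <;> simp [ζ, h, hω]
  calc ∫ ω, (∑ j ∈ range n, (S j).indicator (ζ j) ω - ∑ j ∈ range k, (S j).indicator (ζ j) ω)
        * G ω ∂P
      = ∫ ω, ∑ j ∈ Ico k n, (S j).indicator (ζ j) ω * G ω ∂P := by
        simp_rw [← sum_Ico_eq_sub _ hk, sum_mul]
    _ = ∫ ω, ∑ j ∈ Ico k n, (S j).indicator (Z (j + 1)) ω * G ω ∂P := by
        rw [integral_finsetSum _ fun j _ => (hζ j).mul_bdd hGm hGC,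
          integral_finsetSum _ fun j _ => (hZS j).mul_bdd hGm hGC]
        exact sum_congr rfl fun j hj => hterm j (mem_Ico.1 hj).1
    _ ≤ ∫ ω, (∑ j ∈ range n, (S j).indicator (Z (j + 1)) ω) * G ω ∂P := by
        refine integral_mono (integrable_finsetSum _ fun j _ => (hZS j).mul_bdd hGm hGC)
          ((integrable_finsetSum _ fun j _ => hZS j).mul_bdd hGm hGC) fun ω => ?_
        rw [sum_mul]
        exact sum_le_sum_of_subset_of_nonneg (fun j hj => mem_range.2 (mem_Ico.1 hj).2) fun j _ _ =>
          mul_nonneg (Set.indicator_nonneg (fun _ _ => hZ_nonneg _ _) _) (hG_nonneg ω)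

theorem eLpNorm_sum_indicator_condExp_le (hZ_nonneg : ∀ k ω, 0 ≤ Z k ω)
    (hZ : ∀ k, Integrable (Z k) P) (hS : ∀ j, MeasurableSet[ℱ j] (S j)) (n : ℕ) {s : ℝ}
    (hs : 1 ≤ s) :
    eLpNorm (fun ω => ∑ j ∈ range n, (S j).indicator (P[Z (j + 1)|ℱ j]) ω) (.ofReal s) P ≤
      .ofReal s *
        eLpNorm (fun ω => ∑ j ∈ range n, (S j).indicator (Z (j + 1)) ω) (.ofReal s) P := by
  set ζ : ℕ → Ω → ℝ := fun j ω => max (P[Z (j + 1)|ℱ j] ω) 0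
  have hζ_ae : ∀ᵐ ω ∂P, ∀ j, P[Z (j + 1)|ℱ j] ω = ζ j ω := by
    refine ae_all_iff.2 fun j => ?_
    filter_upwards [condExp_nonneg (m := ℱ j) (ae_of_all P (hZ_nonneg (j + 1)))] with ω hω
    exact (max_eq_left hω).symm
  have hζ_nonneg j ω : 0 ≤ (S j).indicator (ζ j) ω :=
    Set.indicator_nonneg (fun _ _ => le_max_right _ _) ω
  rw [eLpNorm_congr_ae (g := fun ω => ∑ j ∈ range n, (S j).indicator (ζ j) ω) <|
    hζ_ae.mono fun ω hω => sum_congr rfl fun j _ => by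
      by_cases h : ω ∈ S j <;> simp [h, hω j]]
  refine (incrementsDominated_compensator hZ_nonneg hZ hS n).eLpNorm_le ?_ ?_ ?_ ?_ ?_ ?_ hs
  · exact fun k => integrable_finsetSum _ fun j _ =>
      integrable_condExp.pos_part.indicator (ℱ.le j _ (hS j))
  · exact integrable_finsetSum _ fun j _ => (hZ _).indicator (ℱ.le j _ (hS j))
  · exact fun ω => sum_nonneg fun j _ => Set.indicator_nonneg (fun _ _ => hZ_nonneg _ _) ω
  · exact fun ω => monotone_nat_of_le_succ fun k => by
      simpa only [sum_range_succ] using le_add_of_nonneg_right (hζ_nonneg k ω)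
  · simp
  · exact fun k => Finset.stronglyMeasurable_fun_sum _ fun j hj =>
      ((stronglyMeasurable_condExp.measurable.max measurable_const).stronglyMeasurable.indicator
        (hS j)).mono
        (ℱ.mono (Nat.lt_succ_iff.1 (mem_range.1 hj)))

end Compensator

end

theorem stmt_17_general {Ω : Type*} {m0 : MeasurableSpace Ω}
    (P : Measure Ω) [IsProbabilityMeasure P]
    (ℱ : Filtration ℕ m0) (Z : ℕ → Ω → ℝ)
    (hnonneg : ∀ k ω, 0 ≤ Z k ω)
    (hint : ∀ k, Integrable (Z k) P)
    (X Y : ℕ → Ω → ℝ)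
    (hX : ∀ n ω, X n ω = ∑ k ∈ Finset.Icc 1 n, Z k ω)
    (hY : ∀ n ω, Y n ω = ∑ k ∈ Finset.Icc 1 n, (P[Z k | ℱ (k - 1)]) ω)
    (μ : Ω → ℕ) (hμ : IsStoppingTime ℱ (fun ω => (μ ω : WithTop ℕ)))
    (n : ℕ) (s : ℝ) (hs : 1 ≤ s) :
    eLpNorm (fun ω => Y (min (μ ω) n) ω) (ENNReal.ofReal s) P
      ≤ ENNReal.ofReal s * eLpNorm (fun ω => X (min (μ ω) n) ω) (ENNReal.ofReal s) P := by
  have hS j : MeasurableSet[ℱ j] {ω | j < μ ω} := by simpa using hμ.measurableSet_gt j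
  have hstopped (f : ℕ → Ω → ℝ) ω : ∑ k ∈ Icc 1 (min (μ ω) n), f k ω =
      ∑ j ∈ range n, {ω | j < μ ω}.indicator (f (j + 1)) ω := by
    simp only [sum_Icc_one_min_eq_sum_range_ite, Set.indicator_apply, Set.mem_ofPred_eq]
  simp_rw [hX, hY, hstopped, Nat.add_sub_cancel]
  exact eLpNorm_sum_indicator_condExp_le hnonneg hint hS n hs

theorem stmt_17 {Ω : Type*} {m0 : MeasurableSpace Ω}
    (P : Measure Ω) [IsProbabilityMeasure P]
    (ℱ : Filtration ℕ m0) (Z : ℕ → Ω → ℝ)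
    (hadapted : StronglyAdapted ℱ Z)
    (hnonneg : ∀ k ω, 0 ≤ Z k ω)
    (hint : ∀ k, Integrable (Z k) P)
    (X Y : ℕ → Ω → ℝ)
    (hX : ∀ n ω, X n ω = ∑ k ∈ Finset.Icc 1 n, Z k ω)
    (hY : ∀ n ω, Y n ω = ∑ k ∈ Finset.Icc 1 n, (P[Z k | ℱ (k - 1)]) ω)
    (μ : Ω → ℕ) (hμ : IsStoppingTime ℱ (fun ω => (μ ω : WithTop ℕ))) (N : ℕ) (hbdd : ∀ ω, μ ω ≤ N)
    (n : ℕ) (s : ℝ) (hs : 1 ≤ s) :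
    eLpNorm (fun ω => Y (min (μ ω) n) ω) (ENNReal.ofReal s) P
      ≤ ENNReal.ofReal s * eLpNorm (fun ω => X (min (μ ω) n) ω) (ENNReal.ofReal s) P :=
  stmt_17_general P ℱ Z hnonneg hint X Y hX hY μ hμ n s hs
end

section
/- Let T ≥ 10 be an integer, η > 0, v > 0, ε > 0, and define Δ_{t,1} := (η/√(T-1)) · 1/(√(v_{t-1}) + ε) − (η/√T) · 1/(√(v_t) + ε), where v_t = (1 − 1/T) v_{t-1} + (1/T) g_t² with v_0 = v and g_1,...,g_T ∈ ℝ. Then Δ_{t,1} ≥ 0 for all 1 ≤ t ≤ T, and ∑_{t=1}^{T} Δ_{t,1} ≤ 6η (1/√v − 1/√(S_T)) + η/(2√v) ≤ (13/(2√v)) η, where S_t := v + ∑_{s=1}^{t} g_s². -/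
/-!
Write the effective step `η / (√τ (√x + ε))` as `η / (√(τ x) + ε √τ)`. Multiplied by `T`, the
recursion reads `T v_t = (T - 1) v_{t-1} + g_t²`, so `w = √((T - 1) v_{t-1})` and `w' = √(T v_t)`
satisfy `w'² - w² = S_t - S_{t-1} ≥ 0`, which already gives `Δ_{t,1} ≥ 0`. Unrolling the recursion
gives `(T - 1) v_{t-1} ≥ (1 - 1/T)^t S_{t-1}`, and `(1 - 1/T)^T ≥ 9 / (10 e) > (5/9)²`; hence
`√S ≤ (9/5) w` for both roots, and `1/w - 1/w' ≤ (9/5)³ (1/√S_{t-1} - 1/√S_t)` telescopes with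
`(9/5)³ ≤ 6`. The `ε`-parts of the denominators contribute `(√T - √(T-1)) / (√(T-1) w')` per step,
which is at most `1 / (2 T √v)` because `v_t ≥ (5/9)² v`.
-/

open Real Finset

noncomputable def effectiveStepSize (η ε τ x : ℝ) : ℝ := η / √τ * (1 / (√x + ε))

lemma effectiveStepSize_eq (η ε x : ℝ) {τ : ℝ} (hτ : 0 ≤ τ) :
    effectiveStepSize η ε τ x = η * (1 / (√(τ * x) + ε * √τ)) := by
  rw [effectiveStepSize, sqrt_mul hτ, div_mul_div_comm, mul_one, mul_one_div, mul_add, mul_comm ε]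

lemma one_div_add_sub_one_div_add_le {w₀ w₁ e₀ e₁ : ℝ} (hw₀ : 0 < w₀) (hw : w₀ ≤ w₁)
    (he₀ : 0 < e₀) (he : e₀ ≤ e₁) :
    1 / (w₀ + e₀) - 1 / (w₁ + e₁) ≤ (1 / w₀ - 1 / w₁) + (e₁ - e₀) / (e₀ * w₁) := by
  have hw₁ : 0 < w₁ := hw₀.trans_le hw
  have he₁ : 0 < e₁ := he₀.trans_le he
  calc 1 / (w₀ + e₀) - 1 / (w₁ + e₁)
      = (w₁ - w₀) / ((w₀ + e₀) * (w₁ + e₁)) + (e₁ - e₀) / ((w₀ + e₀) * (w₁ + e₁)) := by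
        field_simp; ring
    _ ≤ (w₁ - w₀) / (w₀ * w₁) + (e₁ - e₀) / (e₀ * w₁) := by
        gcongr <;> nlinarith
    _ = (1 / w₀ - 1 / w₁) + (e₁ - e₀) / (e₀ * w₁) := by field_simp

lemma one_div_sub_one_div_le_of_sq_sub_sq_eq {w₀ w₁ s₀ s₁ κ : ℝ} (hs₀ : 0 < s₀) (hs : s₀ ≤ s₁)
    (hw₀ : 0 < w₀) (hw₁ : 0 < w₁) (h₀ : s₀ ≤ κ * w₀) (h₁ : s₁ ≤ κ * w₁)
    (heq : w₁ ^ 2 - w₀ ^ 2 = s₁ ^ 2 - s₀ ^ 2) :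
    1 / w₀ - 1 / w₁ ≤ κ ^ 3 * (1 / s₀ - 1 / s₁) := by
  have hs₁ : 0 < s₁ := hs₀.trans_le hs
  have hκ : 0 < κ := pos_of_mul_pos_left (hs₀.trans_le h₀) hw₀.le
  have hden : s₀ * s₁ * (s₀ + s₁) ≤ κ ^ 3 * (w₀ * w₁ * (w₀ + w₁)) := by
    calc s₀ * s₁ * (s₀ + s₁) ≤ (κ * w₀) * (κ * w₁) * (κ * w₀ + κ * w₁) := by gcongr
      _ = κ ^ 3 * (w₀ * w₁ * (w₀ + w₁)) := by ring
  calc 1 / w₀ - 1 / w₁ = (s₁ ^ 2 - s₀ ^ 2) / (w₀ * w₁ * (w₀ + w₁)) := by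
        rw [← heq]; field_simp; ring
    _ ≤ (s₁ ^ 2 - s₀ ^ 2) / (s₀ * s₁ * (s₀ + s₁) / κ ^ 3) := by
        gcongr
        · nlinarith
        · rwa [div_le_iff₀' (by positivity)]
    _ = κ ^ 3 * (1 / s₀ - 1 / s₁) := by field_simp; ring

lemma sqrt_le_mul_sqrt {a b κ : ℝ} (hκ : 0 ≤ κ) (h : a ≤ κ ^ 2 * b) : √a ≤ κ * √b := by
  rw [← sqrt_sq hκ, ← sqrt_mul (sq_nonneg κ)]
  exact sqrt_le_sqrt h

lemma four_mul_mul_sqrt_sub_sqrt_sub_one_le {T : ℝ} (hT : 10 ≤ T) :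
    4 * T * (√T - √(T - 1)) ≤ √(T - 1) * √T := by
  set r₀ := √(T - 1) with hr₀_def
  set r₁ := √T
  have hr₀sq : r₀ ^ 2 = T - 1 := sq_sqrt (by linarith)
  have hr₁sq : r₁ ^ 2 = T := sq_sqrt (by linarith)
  have hr₀ : 3 ≤ r₀ := by rw [hr₀_def, le_sqrt (by norm_num) (by linarith)]; linarith
  have hr : r₀ ≤ r₁ := sqrt_le_sqrt (by linarith)
  have hconj : (r₁ - r₀) * (r₁ + r₀) = 1 := by linear_combination hr₁sq - hr₀sq
  nlinarith [mul_le_mul_of_nonneg_left hr (sub_nonneg.2 hr)]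

lemma five_div_nine_sq_le_one_sub_one_div_pow {t T : ℕ} (hT : 10 ≤ T) (ht : t ≤ T) :
    (5 / 9 : ℝ) ^ 2 ≤ (1 - 1 / T) ^ t := by
  have hT₁ : (1 : ℝ) ≤ T := by exact_mod_cast (by omega : 1 ≤ T)
  refine le_trans ?_ (pow_le_pow_of_le_one (sub_nonneg.2 (div_le_one_of_le₀ hT₁ (by linarith)))
    (sub_le_self _ (by positivity)) ht)
  obtain ⟨n, rfl⟩ : ∃ n, T = n + 1 := ⟨T - 1, by omega⟩
  have hn : (9 : ℝ) ≤ n := by exact_mod_cast (by omega : 9 ≤ n)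
  have hq : 1 - 1 / ((n + 1 : ℕ) : ℝ) = (1 + (n : ℝ)⁻¹)⁻¹ := by
    push_cast; field_simp; ring
  have he : (1 + (n : ℝ)⁻¹) ^ n ≤ 2.7182818286 :=
    one_add_inv_pow_le_exp.trans exp_one_lt_d9.le
  have h9 : (9 / 10 : ℝ) ≤ (1 + (n : ℝ)⁻¹)⁻¹ := by
    rw [le_inv_comm₀ (by norm_num) (by positivity)]
    have : (n : ℝ)⁻¹ ≤ 9⁻¹ := inv_anti₀ (by norm_num) hn
    linarith
  rw [hq]
  calc (5 / 9 : ℝ) ^ 2 ≤ 2.7182818286⁻¹ * (9 / 10) := by norm_num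
    _ ≤ ((1 + (n : ℝ)⁻¹) ^ n)⁻¹ * (1 + (n : ℝ)⁻¹)⁻¹ := by gcongr
    _ = (1 + (n : ℝ)⁻¹)⁻¹ ^ (n + 1) := by rw [pow_succ, inv_pow]

lemma effectiveStepSize_sub_nonneg {T η ε x y : ℝ} (hT : 1 < T) (hη : 0 ≤ η) (hε : 0 < ε)
    (hxy : (T - 1) * x ≤ T * y) :
    0 ≤ effectiveStepSize η ε (T - 1) x - effectiveStepSize η ε T y := by
  rw [effectiveStepSize_eq η ε x (by linarith), effectiveStepSize_eq η ε y (by linarith), ← mul_sub]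
  have hr₀ : 0 < √(T - 1) := sqrt_pos.2 (by linarith)
  refine mul_nonneg hη (sub_nonneg.2 (one_div_le_one_div_of_le (by positivity) ?_))
  gcongr
  linarith

lemma effectiveStepSize_sub_le {T η ε x y S₀ S₁ v₀ : ℝ} (hT : 10 ≤ T) (hη : 0 ≤ η) (hε : 0 < ε)
    (hv₀ : 0 < v₀) (hS₀ : 0 < S₀) (hS : S₀ ≤ S₁) (hstep : T * y = (T - 1) * x + (S₁ - S₀))
    (h₀ : (5 / 9) ^ 2 * S₀ ≤ (T - 1) * x) (hy : (5 / 9) ^ 2 * v₀ ≤ y) :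
    effectiveStepSize η ε (T - 1) x - effectiveStepSize η ε T y
      ≤ 6 * η * (1 / √S₀ - 1 / √S₁) + η / (2 * T * √v₀) := by
  rw [effectiveStepSize_eq η ε x (by linarith), effectiveStepSize_eq η ε y (by linarith), ← mul_sub]
  set w₀ := √((T - 1) * x)
  set w₁ := √(T * y)
  set r₀ := √(T - 1)
  set r₁ := √T
  have hr₀ : 0 < r₀ := sqrt_pos.2 (by linarith)
  have hr : r₀ ≤ r₁ := sqrt_le_sqrt (by linarith)
  have hTx : 0 < (T - 1) * x := (by positivity : (0 : ℝ) < (5 / 9) ^ 2 * S₀).trans_le h₀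
  have hw₀ : 0 < w₀ := sqrt_pos.2 hTx
  have hw : w₀ ≤ w₁ := sqrt_le_sqrt (by linarith)
  have hw₁ : 0 < w₁ := hw₀.trans_le hw
  have hsq : w₁ ^ 2 - w₀ ^ 2 = √S₁ ^ 2 - √S₀ ^ 2 := by
    rw [sq_sqrt (by linarith), sq_sqrt hTx.le, sq_sqrt (by linarith), sq_sqrt hS₀.le]
    linarith
  have hs₀ : √S₀ ≤ 9 / 5 * w₀ := sqrt_le_mul_sqrt (by norm_num) (by linarith)
  have hs₁ : √S₁ ≤ 9 / 5 * w₁ := sqrt_le_mul_sqrt (by norm_num) (by linarith)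
  have hA : 1 / w₀ - 1 / w₁ ≤ (9 / 5) ^ 3 * (1 / √S₀ - 1 / √S₁) :=
    one_div_sub_one_div_le_of_sq_sub_sq_eq (sqrt_pos.2 hS₀) (sqrt_le_sqrt hS) hw₀ hw₁ hs₀ hs₁ hsq
  have hw₁v : 5 / 9 * (r₁ * √v₀) ≤ w₁ := by
    have hv : √v₀ ≤ 9 / 5 * √y := sqrt_le_mul_sqrt (by norm_num) (by linarith)
    calc 5 / 9 * (r₁ * √v₀) ≤ r₁ * √y := by nlinarith [hr₀.trans_le hr]
      _ = w₁ := (sqrt_mul (by linarith) y).symm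
  have hB : (ε * r₁ - ε * r₀) / (ε * r₀ * w₁) ≤ 1 / (2 * T * √v₀) := by
    calc (ε * r₁ - ε * r₀) / (ε * r₀ * w₁) = (r₁ - r₀) / (r₀ * w₁) := by
          field_simp
      _ ≤ (r₁ - r₀) / (r₀ * (5 / 9 * (r₁ * √v₀))) := by
          gcongr
      _ ≤ 1 / (2 * T * √v₀) := by
          have hv : 0 < √v₀ := sqrt_pos.2 hv₀
          have h4 : 4 * T * (r₁ - r₀) ≤ r₀ * r₁ := four_mul_mul_sqrt_sub_sqrt_sub_one_le hT
          rw [div_le_div_iff₀ (by positivity) (by positivity)]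
          nlinarith [mul_le_mul_of_nonneg_right h4 hv.le,
            mul_pos (mul_pos hr₀ (hr₀.trans_le hr)) hv]
  have hD : 0 ≤ 1 / √S₀ - 1 / √S₁ :=
    sub_nonneg.2 (one_div_le_one_div_of_le (sqrt_pos.2 hS₀) (sqrt_le_sqrt hS))
  calc η * (1 / (w₀ + ε * r₀) - 1 / (w₁ + ε * r₁))
      ≤ η * ((1 / w₀ - 1 / w₁) + (ε * r₁ - ε * r₀) / (ε * r₀ * w₁)) := by
        gcongr
        exact one_div_add_sub_one_div_add_le hw₀ hw (by positivity) (by gcongr)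
    _ ≤ η * ((9 / 5) ^ 3 * (1 / √S₀ - 1 / √S₁) + 1 / (2 * T * √v₀)) := by gcongr
    _ ≤ 6 * η * (1 / √S₀ - 1 / √S₁) + η / (2 * T * √v₀) := by
        rw [mul_add, mul_one_div]
        nlinarith [mul_nonneg hη hD]

lemma pow_succ_mul_add_le_sub_one_mul {T : ℝ} (hT : 1 ≤ T) {N : ℕ} {v g S : ℕ → ℝ}
    (hS₀ : S 0 = v 0) (hS : ∀ t, S (t + 1) = S t + g (t + 1) ^ 2)
    (hmul : ∀ t < N, T * v (t + 1) = (T - 1) * v t + g (t + 1) ^ 2) :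
    ∀ t ≤ N, (1 - 1 / T) ^ (t + 1) * ((T - 1) * v 0 + S t) ≤ (T - 1) * v t := by
  have hq₀ : 0 ≤ 1 - 1 / T := sub_nonneg.2 (div_le_one_of_le₀ hT (by linarith))
  have hq₁ : 1 - 1 / T ≤ 1 := sub_le_self _ (by positivity)
  have hT₀ : T ≠ 0 := (zero_lt_one.trans_le hT).ne'
  have hsub : ∀ t, (T - 1) * v t = (1 - 1 / T) * (T * v t) := fun t => by field_simp
  intro t ht
  induction t with
  | zero => exact le_of_eq (by rw [hS₀, zero_add, pow_one, one_sub_div hT₀]; field_simp; ring)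
  | succ n ih =>
    calc (1 - 1 / T) ^ (n + 2) * ((T - 1) * v 0 + S (n + 1))
        = (1 - 1 / T) * ((1 - 1 / T) ^ (n + 1) * ((T - 1) * v 0 + S n)
          + (1 - 1 / T) ^ (n + 1) * g (n + 1) ^ 2) := by rw [hS]; ring
      _ ≤ (1 - 1 / T) * ((T - 1) * v n + g (n + 1) ^ 2) := by
          gcongr ?_ * (?_ + ?_)
          · exact ih (by omega)
          · exact mul_le_of_le_one_left (sq_nonneg _) (pow_le_one₀ hq₀ hq₁)
      _ = (T - 1) * v (n + 1) := by rw [hsub (n + 1), hmul n (by omega)]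

lemma sum_effectiveStepSize_sub_le {T : ℕ} (hT : 10 ≤ T) {η ε : ℝ} (hη : 0 ≤ η) (hε : 0 < ε)
    {v g S : ℕ → ℝ} (hv₀ : 0 < v 0) (hS₀ : S 0 = v 0) (hS : ∀ t, S (t + 1) = S t + g (t + 1) ^ 2)
    (hmul : ∀ t < T, (T : ℝ) * v (t + 1) = (T - 1) * v t + g (t + 1) ^ 2) :
    ∑ t ∈ range T, (effectiveStepSize η ε (T - 1) (v t) - effectiveStepSize η ε T (v (t + 1)))
      ≤ 6 * η * (1 / √(v 0) - 1 / √(S T)) + η / (2 * √(v 0)) := by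
  have hTr : (10 : ℝ) ≤ T := by exact_mod_cast hT
  have hSmono : Monotone S :=
    monotone_nat_of_le_succ fun t => by rw [hS]; exact le_add_of_nonneg_right (sq_nonneg _)
  have hSpos : ∀ t, 0 < S t := fun t => (hS₀ ▸ hv₀).trans_le (hSmono t.zero_le)
  have hX : 0 ≤ ((T : ℝ) - 1) * v 0 := mul_nonneg (by linarith) hv₀.le
  have hc : ∀ t < T, (5 / 9 : ℝ) ^ 2 * ((T - 1) * v 0 + S t) ≤ (T - 1) * v t := fun t ht =>
    (mul_le_mul_of_nonneg_right (five_div_nine_sq_le_one_sub_one_div_pow hT ht)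
      (add_nonneg hX (hSpos t).le)).trans
        (pow_succ_mul_add_le_sub_one_mul (by linarith) hS₀ hS hmul t ht.le)
  have hterm : ∀ t ∈ range T,
      effectiveStepSize η ε (T - 1) (v t) - effectiveStepSize η ε T (v (t + 1))
        ≤ 6 * η * (1 / √(S t) - 1 / √(S (t + 1))) + η / (2 * T * √(v 0)) := by
    intro t ht
    have ht : t < T := mem_range.1 ht
    have hvt := hc t ht
    refine effectiveStepSize_sub_le hTr hη hε hv₀ (hSpos t) (hSmono t.le_succ)
      (by rw [hmul t ht, hS]; ring) (by linarith) ?_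
    refine le_of_mul_le_mul_left ?_ (by positivity : (0 : ℝ) < T)
    nlinarith [hmul t ht, hSmono t.zero_le, sq_nonneg (g (t + 1))]
  calc _ ≤ ∑ t ∈ range T, (6 * η * (1 / √(S t) - 1 / √(S (t + 1))) + η / (2 * T * √(v 0))) :=
        sum_le_sum hterm
    _ = 6 * η * (1 / √(S 0) - 1 / √(S T)) + T * (η / (2 * T * √(v 0))) := by
        rw [sum_add_distrib, ← mul_sum, sum_range_sub' (fun t => 1 / √(S t)), sum_const, card_range,
          nsmul_eq_mul]
    _ = 6 * η * (1 / √(v 0) - 1 / √(S T)) + η / (2 * √(v 0)) := by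
        rw [hS₀]
        field_simp

theorem stmt_19 (T : ℕ) (hT : 10 ≤ T) (η v₀ ε : ℝ)
    (hη : 0 < η) (hv : 0 < v₀) (hε : 0 < ε)
    (g : ℕ → ℝ) (v : ℕ → ℝ) (h0 : v 0 = v₀)
    (hrec : ∀ t, 1 ≤ t → t ≤ T →
      v t = (1 - 1 / (T : ℝ)) * v (t - 1) + (1 / (T : ℝ)) * (g t) ^ 2)
    (Δ : ℕ → ℝ)
    (hΔ : ∀ t, Δ t = (η / Real.sqrt ((T : ℝ) - 1)) * (1 / (Real.sqrt (v (t - 1)) + ε))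
      - (η / Real.sqrt T) * (1 / (Real.sqrt (v t) + ε)))
    (S : ℕ → ℝ) (hS : ∀ t, S t = v₀ + ∑ s ∈ Finset.Icc 1 t, (g s) ^ 2) :
    (∀ t, 1 ≤ t → t ≤ T → 0 ≤ Δ t) ∧
    (∑ t ∈ Finset.Icc 1 T, Δ t
        ≤ 6 * η * (1 / Real.sqrt v₀ - 1 / Real.sqrt (S T)) + η / (2 * Real.sqrt v₀)) ∧
    (6 * η * (1 / Real.sqrt v₀ - 1 / Real.sqrt (S T)) + η / (2 * Real.sqrt v₀)
        ≤ (13 / (2 * Real.sqrt v₀)) * η) := by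
  subst h0
  have hS₀ : S 0 = v 0 := by rw [hS]; simp
  have hSsucc : ∀ t, S (t + 1) = S t + g (t + 1) ^ 2 := fun t => by
    rw [hS, hS, sum_Icc_succ_top (by omega), add_assoc]
  have hmul : ∀ t < T, (T : ℝ) * v (t + 1) = (T - 1) * v t + g (t + 1) ^ 2 := fun t ht => by
    have hT₀ : (T : ℝ) ≠ 0 := by positivity
    rw [hrec (t + 1) (by omega) ht, Nat.add_sub_cancel]; field_simp
  have hΔsucc : ∀ t, Δ (t + 1) =
      effectiveStepSize η ε (T - 1) (v t) - effectiveStepSize η ε T (v (t + 1)) := fun t => by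
    rw [hΔ, Nat.add_sub_cancel]; rfl
  have hsum : ∑ t ∈ Icc 1 T, Δ t = ∑ t ∈ range T, Δ (t + 1) := by
    rw [range_eq_Ico, sum_Ico_add' Δ 0 T 1, zero_add, Ico_add_one_right_eq_Icc]
  refine ⟨fun t ht₁ htT => ?_, ?_, ?_⟩
  · obtain ⟨s, rfl⟩ : ∃ s, t = s + 1 := ⟨t - 1, by omega⟩
    rw [hΔsucc]
    exact effectiveStepSize_sub_nonneg (by exact_mod_cast (by omega : 1 < T)) hη.le hε
      (by linarith [hmul s htT, sq_nonneg (g (s + 1))])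
  · rw [hsum]
    simpa only [hΔsucc] using sum_effectiveStepSize_sub_le hT hη.le hε hv hS₀ hSsucc hmul
  · have hST : 0 ≤ η * (1 / √(S T)) := by positivity
    have hsv : 0 < √(v 0) := sqrt_pos.2 hv
    calc _ ≤ 6 * η * (1 / √(v 0)) + η / (2 * √(v 0)) := by linarith
      _ = 13 / (2 * √(v 0)) * η := by field_simp; ring
end
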